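/- arXiv:2012.06918 — 2 statements merged into one kernel-verified Lean document; each statement's English description precedes it below -/
import Mathlib

section
/- Define the Kullback–Leibler divergence D(p‖q) = Σ_x p_x (log p_x − log q_x) for probability vectors p, q on a finite set with q_x > 0 whenever p_x > 0. Define the classical channel divergence D(N‖M) = max_x D(N(x)‖M(x)) over input symbols x, where N(x), M(x) are the output distributions. Then D satisfies the data processing inequality under pre- and post-composition with classical channels: for any stochastic maps E (post-processing) and F (pre-processing), D(E∘N∘F ‖ E∘M∘F) ≤ D(N‖M). -/
/-!
Both processing steps are instances of the subadditivity
`KLdiv (∑ i, p i) (∑ i, q i) ≤ ∑ i, KLdiv (p i) (q i)` of the unnormalised divergence,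
which is the log-sum inequality at each output symbol. Post-processing writes `E p` as
`∑ y, p y • E y`, a sum whose terms have divergences `p y * (log (p y) - log (q y))`;
pre-processing writes `N (F x')` as `∑ x, F x' x • N x`, whose terms have divergences
`F x' x * KLdiv (N x) (M x)`, and this average is at most the maximum.
-/

open Finset

/-- Kullback–Leibler divergence of finite probability vectors. -/
noncomputable def KLdiv {Y : Type} [Fintype Y] (p q : Y → ℝ) : ℝ :=
  ∑ y, p y * (Real.log (p y) - Real.log (q y))

/-- Composition of classical channels (stochastic maps): `(E ∘ N) x z = ∑ y N x y * E y z`. -/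
noncomputable def chanComp {X Y Z : Type} [Fintype Y]
    (E : Y → Z → ℝ) (N : X → Y → ℝ) : X → Z → ℝ :=
  fun x z => ∑ y, N x y * E y z

open Real

theorem mul_log_add_sub_mul_le {a b c : ℝ} (ha : 0 ≤ a) (hb : 0 ≤ b) (hab : 0 < a → 0 < b)
    (hc : 0 < c) : a * log c + a - b * c ≤ a * (log a - log b) := by
  rcases ha.eq_or_lt with rfl | ha
  · simpa using mul_nonneg hb hc.le
  have hb := hab ha
  have key := log_le_sub_one_of_pos (show 0 < b * c / a by positivity)
  rw [log_div (by positivity) ha.ne', log_mul hb.ne' hc.ne'] at key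
  have hbc : a * (b * c / a) = b * c := mul_div_cancel₀ _ ha.ne'
  nlinarith [mul_le_mul_of_nonneg_left key ha.le]

theorem log_sum_inequality {ι : Type*} (s : Finset ι) {a b : ι → ℝ}
    (ha : ∀ i ∈ s, 0 ≤ a i) (hb : ∀ i ∈ s, 0 ≤ b i)
    (hab : ∀ i ∈ s, 0 < a i → 0 < b i) :
    (∑ i ∈ s, a i) * (log (∑ i ∈ s, a i) - log (∑ i ∈ s, b i))
      ≤ ∑ i ∈ s, a i * (log (a i) - log (b i)) := by
  rcases (sum_nonneg ha).eq_or_lt with hA | hA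
  · rw [← hA, zero_mul]
    refine sum_nonneg fun i hi => ?_
    rw [(sum_eq_zero_iff_of_nonneg ha).1 hA.symm i hi, zero_mul]
  have hB : 0 < ∑ i ∈ s, b i := by
    obtain ⟨i, hi, hai⟩ := (sum_pos_iff_of_nonneg ha).1 hA
    exact (sum_pos_iff_of_nonneg hb).2 ⟨i, hi, hab i hi hai⟩
  -- Sum the termwise bound with `c = A / B`; the linear terms `a i - b i * c` add up to zero.
  calc (∑ i ∈ s, a i) * (log (∑ i ∈ s, a i) - log (∑ i ∈ s, b i))
      = ∑ i ∈ s, (a i * log ((∑ i ∈ s, a i) / ∑ i ∈ s, b i) + a i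
          - b i * ((∑ i ∈ s, a i) / ∑ i ∈ s, b i)) := by
        rw [sum_sub_distrib, sum_add_distrib, ← sum_mul, ← sum_mul,
          mul_div_cancel₀ _ hB.ne', log_div hA.ne' hB.ne']
        ring
    _ ≤ ∑ i ∈ s, a i * (log (a i) - log (b i)) :=
        sum_le_sum fun i hi =>
          mul_log_add_sub_mul_le (ha i hi) (hb i hi) (hab i hi) (by positivity)

section KLdiv

variable {ι Y : Type} [Fintype Y]

theorem KLdiv_sum_le (s : Finset ι) (p q : ι → Y → ℝ) (hp : ∀ i y, 0 ≤ p i y)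
    (hq : ∀ i y, 0 ≤ q i y) (hpq : ∀ i y, 0 < p i y → 0 < q i y) :
    KLdiv (∑ i ∈ s, p i) (∑ i ∈ s, q i) ≤ ∑ i ∈ s, KLdiv (p i) (q i) := by
  simp only [KLdiv, Finset.sum_apply]
  rw [sum_comm]
  exact sum_le_sum fun y _ =>
    log_sum_inequality s (fun i _ => hp i y) (fun i _ => hq i y) (fun i _ => hpq i y)

theorem KLdiv_smul_smul (c : ℝ) {p q : Y → ℝ} (hpq : ∀ y, p y ≠ 0 → q y ≠ 0) :
    KLdiv (c • p) (c • q) = c * KLdiv p q := by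
  rw [KLdiv, KLdiv, mul_sum]
  refine sum_congr rfl fun y _ => ?_
  simp only [Pi.smul_apply, smul_eq_mul]
  rcases eq_or_ne c 0 with rfl | hc
  · simp
  rcases eq_or_ne (p y) 0 with hy | hy
  · simp [hy]
  rw [log_mul hc hy, log_mul hc (hpq y hy)]
  ring

theorem KLdiv_smul_smul_self {c d : ℝ} (hcd : c ≠ 0 → d ≠ 0) (K : Y → ℝ) :
    KLdiv (c • K) (d • K) = c * (log c - log d) * ∑ y, K y := by
  rw [KLdiv, mul_sum]
  refine sum_congr rfl fun y _ => ?_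
  simp only [Pi.smul_apply, smul_eq_mul]
  rcases eq_or_ne c 0 with rfl | hc
  · simp
  rcases eq_or_ne (K y) 0 with hy | hy
  · simp [hy]
  rw [log_mul hc hy, log_mul (hcd hc) hy]
  ring

end KLdiv

section chanComp

variable {X Y Z : Type} [Fintype Y] {E : Y → Z → ℝ} {N : X → Y → ℝ}

theorem chanComp_eq_sum_smul (E : Y → Z → ℝ) (N : X → Y → ℝ) (x : X) :
    chanComp E N x = ∑ y, N x y • E y := by
  ext z
  simp [chanComp, Finset.sum_apply]

theorem chanComp_nonneg (hE : ∀ y z, 0 ≤ E y z) (hN : ∀ x y, 0 ≤ N x y) (x : X) (z : Z) :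
    0 ≤ chanComp E N x z :=
  sum_nonneg fun y _ => mul_nonneg (hN x y) (hE y z)

theorem chanComp_pos_of_pos {E' : Y → Z → ℝ} (hE : ∀ y z, 0 ≤ E y z)
    (hE' : ∀ y z, 0 ≤ E' y z) (hEE' : ∀ y z, 0 < E y z → 0 < E' y z)
    (hN : ∀ x y, 0 ≤ N x y) (x : X) (z : Z)
    (h : 0 < chanComp E N x z) : 0 < chanComp E' N x z := by
  obtain ⟨y, -, hy⟩ := (sum_pos_iff_of_nonneg fun y _ => mul_nonneg (hN x y) (hE y z)).1 h
  refine (sum_pos_iff_of_nonneg fun y _ => mul_nonneg (hN x y) (hE' y z)).2 ⟨y, mem_univ y, ?_⟩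
  exact mul_pos (pos_of_mul_pos_left hy (hE y z)) (hEE' y z (pos_of_mul_pos_right hy (hN x y)))

end chanComp

section DataProcessing

variable {X Y Z : Type} [Fintype X] [Fintype Y] [Fintype Z]

theorem KLdiv_sum_smul_le {p q : Y → ℝ} (hp : ∀ y, 0 ≤ p y) (hq : ∀ y, 0 ≤ q y)
    (hpq : ∀ y, 0 < p y → 0 < q y) {E : Y → Z → ℝ} (hE : ∀ y z, 0 ≤ E y z)
    (hEs : ∀ y, ∑ z, E y z = 1) :
    KLdiv (∑ y, p y • E y) (∑ y, q y • E y) ≤ KLdiv p q := by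
  refine (KLdiv_sum_le univ (fun y => p y • E y) (fun y => q y • E y)
    (fun y z => mul_nonneg (hp y) (hE y z)) (fun y z => mul_nonneg (hq y) (hE y z))
    fun y z h => ?_).trans_eq ?_
  · exact mul_pos (hpq y (pos_of_mul_pos_left h (hE y z))) (pos_of_mul_pos_right h (hp y))
  · refine sum_congr rfl fun y _ => ?_
    rw [KLdiv_smul_smul_self (fun h => (hpq y ((hp y).lt_of_ne' h)).ne') (E y), hEs y, mul_one]

theorem KLdiv_sum_smul_le_sum_mul {f : X → ℝ} (hf : ∀ x, 0 ≤ f x) {N M : X → Y → ℝ}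
    (hN : ∀ x y, 0 ≤ N x y) (hM : ∀ x y, 0 ≤ M x y)
    (hNM : ∀ x y, 0 < N x y → 0 < M x y) :
    KLdiv (∑ x, f x • N x) (∑ x, f x • M x) ≤ ∑ x, f x * KLdiv (N x) (M x) := by
  refine (KLdiv_sum_le univ (fun x => f x • N x) (fun x => f x • M x)
    (fun x y => mul_nonneg (hf x) (hN x y)) (fun x y => mul_nonneg (hf x) (hM x y))
    fun x y h => ?_).trans_eq ?_
  · exact mul_pos (pos_of_mul_pos_left h (hN x y)) (hNM x y (pos_of_mul_pos_right h (hf x)))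
  · exact sum_congr rfl fun x _ =>
      KLdiv_smul_smul (f x) fun y h => (hNM x y ((hN x y).lt_of_ne' h)).ne'

end DataProcessing

theorem stmt5_general {X' X Y Y' : Type} [Fintype X'] [Fintype X] [Fintype Y] [Fintype Y']
    [Nonempty X']
    (N M : X → Y → ℝ) (F : X' → X → ℝ) (E : Y → Y' → ℝ)
    (hN : ∀ x y, 0 ≤ N x y)
    (hM : ∀ x y, 0 ≤ M x y)
    (hF : ∀ x' x, 0 ≤ F x' x) (hFs : ∀ x', ∑ x, F x' x = 1)
    (hE : ∀ y y', 0 ≤ E y y') (hEs : ∀ y, ∑ y', E y y' = 1)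
    (habs : ∀ x y, 0 < N x y → 0 < M x y) :
    (⨆ x', KLdiv (chanComp E (chanComp N F) x') (chanComp E (chanComp M F) x'))
      ≤ ⨆ x, KLdiv (N x) (M x) := by
  have hle : ∀ x, KLdiv (N x) (M x) ≤ ⨆ x, KLdiv (N x) (M x) :=
    le_ciSup (Set.finite_range _).bddAbove
  refine ciSup_le fun x' => ?_
  calc KLdiv (chanComp E (chanComp N F) x') (chanComp E (chanComp M F) x')
      ≤ KLdiv (chanComp N F x') (chanComp M F x') := by
        rw [chanComp_eq_sum_smul E, chanComp_eq_sum_smul E]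
        exact KLdiv_sum_smul_le (chanComp_nonneg hN hF x') (chanComp_nonneg hM hF x')
          (chanComp_pos_of_pos hN hM habs hF x') hE hEs
    _ ≤ ∑ x, F x' x * KLdiv (N x) (M x) := by
        rw [chanComp_eq_sum_smul N, chanComp_eq_sum_smul M]
        exact KLdiv_sum_smul_le_sum_mul (hF x') hN hM habs
    _ ≤ ∑ x, F x' x * ⨆ x, KLdiv (N x) (M x) :=
        sum_le_sum fun x _ => mul_le_mul_of_nonneg_left (hle x) (hF x' x)
    _ = ⨆ x, KLdiv (N x) (M x) := by rw [← sum_mul, hFs x', one_mul]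

/-- Data processing inequality for the classical channel divergence
`D(N‖M) = max_x D(N(x)‖M(x))` under pre- and post-composition with channels. -/
theorem stmt5 {X' X Y Y' : Type} [Fintype X'] [Fintype X] [Fintype Y] [Fintype Y']
    [Nonempty X'] [Nonempty X]
    (N M : X → Y → ℝ) (F : X' → X → ℝ) (E : Y → Y' → ℝ)
    (hN : ∀ x y, 0 ≤ N x y) (hNs : ∀ x, ∑ y, N x y = 1)
    (hM : ∀ x y, 0 ≤ M x y) (hMs : ∀ x, ∑ y, M x y = 1)
    (hF : ∀ x' x, 0 ≤ F x' x) (hFs : ∀ x', ∑ x, F x' x = 1)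
    (hE : ∀ y y', 0 ≤ E y y') (hEs : ∀ y, ∑ y', E y y' = 1)
    (habs : ∀ x y, 0 < N x y → 0 < M x y) :
    (⨆ x', KLdiv (chanComp E (chanComp N F) x') (chanComp E (chanComp M F) x'))
      ≤ ⨆ x, KLdiv (N x) (M x) :=
  stmt5_general N M F E hN hM hF hFs hE hEs habs
end

section
/- Let E be a real-valued monotone on a set C of 'classical' objects, monotone under a class of free transformations. For a 'quantum' object N, define the minimal extension E_min(N) := sup { E(Θ[N]) : Θ free transformation with Θ[N] ∈ C } and the maximal extension E_max(N) := inf { E(C) : C ∈ C, N = Υ[C] for some free Υ }. If every free transformation composed with a free transformation is free, then E_min and E_max agree with E on C, and any monotone E' extending E satisfies E_min(N) ≤ E'(N) ≤ E_max(N) for all N in the domain where these are defined. -/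
/-!
Since the identity is free, on `C` the supremum is attained at `Θ = id` and the infimum at
`c0 = c`, and monotonicity of `E` makes these values extremal. For an arbitrary object,
monotonicity of `E'` gives `E (Θ N) = E' (Θ N) ≤ E' N` and `E' (Υ c0) ≤ E' c0 = E c0`.
-/

namespace ResourceExtension

variable {α : Type*} (C : Set α) (Free : Set (α → α)) (E : α → ℝ)

/-- `E_min N` is the supremum of this set. -/
def minExtensionValues (N : α) : Set ℝ := {r | ∃ Θ ∈ Free, Θ N ∈ C ∧ r = E (Θ N)}

/-- `E_max N` is the infimum of this set. -/
def maxExtensionValues (N : α) : Set ℝ := {r | ∃ c0 ∈ C, ∃ Υ ∈ Free, N = Υ c0 ∧ r = E c0}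

variable {C Free E}

theorem isGreatest_minExtensionValues (hId : id ∈ Free)
    (hE : ∀ Θ ∈ Free, ∀ c ∈ C, Θ c ∈ C → E (Θ c) ≤ E c) {c : α} (hc : c ∈ C) :
    IsGreatest (minExtensionValues C Free E c) (E c) := by
  refine ⟨⟨id, hId, hc, rfl⟩, ?_⟩
  rintro r ⟨Θ, hΘ, hΘc, rfl⟩
  exact hE Θ hΘ c hc hΘc

theorem isLeast_maxExtensionValues (hId : id ∈ Free)
    (hE : ∀ Θ ∈ Free, ∀ c ∈ C, Θ c ∈ C → E (Θ c) ≤ E c) {c : α} (hc : c ∈ C) :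
    IsLeast (maxExtensionValues C Free E c) (E c) := by
  refine ⟨⟨c, hc, id, hId, rfl, rfl⟩, ?_⟩
  rintro r ⟨c0, hc0, Υ, hΥ, rfl, rfl⟩
  exact hE Υ hΥ c0 hc0 hc

variable {E' : α → ℝ}

theorem mem_upperBounds_minExtensionValues (hE' : ∀ Θ ∈ Free, ∀ N, E' (Θ N) ≤ E' N)
    (hagree : ∀ c ∈ C, E' c = E c) (N : α) :
    E' N ∈ upperBounds (minExtensionValues C Free E N) := by
  rintro r ⟨Θ, hΘ, hΘN, rfl⟩
  rw [← hagree _ hΘN]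
  exact hE' Θ hΘ N

theorem mem_lowerBounds_maxExtensionValues (hE' : ∀ Θ ∈ Free, ∀ N, E' (Θ N) ≤ E' N)
    (hagree : ∀ c ∈ C, E' c = E c) (N : α) :
    E' N ∈ lowerBounds (maxExtensionValues C Free E N) := by
  rintro r ⟨c0, hc0, Υ, hΥ, rfl, rfl⟩
  rw [← hagree _ hc0]
  exact hE' Υ hΥ c0

end ResourceExtension

open ResourceExtension

theorem stmt7_general {α : Type} (C : Set α) (Free : Set (α → α))
    (hId : id ∈ Free)
    (E : α → ℝ)
    (hE : ∀ Θ ∈ Free, ∀ c ∈ C, Θ c ∈ C → E (Θ c) ≤ E c)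
    (E' : α → ℝ)
    (hE' : ∀ Θ ∈ Free, ∀ N, E' (Θ N) ≤ E' N)
    (hagree : ∀ c ∈ C, E' c = E c) :
    (∀ c ∈ C,
        sSup {r | ∃ Θ ∈ Free, Θ c ∈ C ∧ r = E (Θ c)} = E c ∧
        sInf {r | ∃ c0 ∈ C, ∃ Υ ∈ Free, c = Υ c0 ∧ r = E c0} = E c) ∧
    ∀ N : α,
      ({r | ∃ Θ ∈ Free, Θ N ∈ C ∧ r = E (Θ N)}.Nonempty →
        sSup {r | ∃ Θ ∈ Free, Θ N ∈ C ∧ r = E (Θ N)} ≤ E' N) ∧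
      ({r | ∃ c0 ∈ C, ∃ Υ ∈ Free, N = Υ c0 ∧ r = E c0}.Nonempty →
        E' N ≤ sInf {r | ∃ c0 ∈ C, ∃ Υ ∈ Free, N = Υ c0 ∧ r = E c0}) :=
  ⟨fun _ hc => ⟨(isGreatest_minExtensionValues hId hE hc).csSup_eq,
      (isLeast_maxExtensionValues hId hE hc).csInf_eq⟩,
    fun N => ⟨fun hne => csSup_le hne (mem_upperBounds_minExtensionValues hE' hagree N),
      fun hne => le_csInf hne (mem_lowerBounds_maxExtensionValues hE' hagree N)⟩⟩

/-- Minimal and maximal extensions of a resource monotone `E` from a class `C` of classical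
objects to all objects: both agree with `E` on `C`, and any monotone `E'` extending `E`
is sandwiched between them. -/
theorem stmt7 {α : Type} (C : Set α) (Free : Set (α → α))
    (hId : id ∈ Free)
    (hcomp : ∀ Θ ∈ Free, ∀ L ∈ Free, (Θ ∘ L) ∈ Free)
    (E : α → ℝ)
    (hE : ∀ Θ ∈ Free, ∀ c ∈ C, Θ c ∈ C → E (Θ c) ≤ E c)
    (E' : α → ℝ)
    (hE' : ∀ Θ ∈ Free, ∀ N, E' (Θ N) ≤ E' N)
    (hagree : ∀ c ∈ C, E' c = E c) :
    (∀ c ∈ C,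
        sSup {r | ∃ Θ ∈ Free, Θ c ∈ C ∧ r = E (Θ c)} = E c ∧
        sInf {r | ∃ c0 ∈ C, ∃ Υ ∈ Free, c = Υ c0 ∧ r = E c0} = E c) ∧
    ∀ N : α,
      ({r | ∃ Θ ∈ Free, Θ N ∈ C ∧ r = E (Θ N)}.Nonempty →
        sSup {r | ∃ Θ ∈ Free, Θ N ∈ C ∧ r = E (Θ N)} ≤ E' N) ∧
      ({r | ∃ c0 ∈ C, ∃ Υ ∈ Free, N = Υ c0 ∧ r = E c0}.Nonempty →
        E' N ≤ sInf {r | ∃ c0 ∈ C, ∃ Υ ∈ Free, N = Υ c0 ∧ r = E c0}) :=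
  stmt7_general C Free hId E hE E' hE' hagree
end
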